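/- In a coaugmented k-coalgebra C, the δ-filtration is a coalgebra filtration: Δ(D_n) ⊆ Σ_{r+s=n} D_r ⊗ D_s for all n ∈ ℕ. Consequently C′ := ⋃_{n∈ℕ} D_n is a subcoalgebra of C containing 1̲. (Lemma 2.8(b),(d)) -/

import Mathlib

/-!
Write `π := id - u ∘ ε`. Since `π 1̲ = 0` and `Δ 1̲ = 1̲ ⊗ 1̲`, every `δ_m` with `m ≥ 1` satisfies
`δ_m ∘ π = δ_m`; together with the recursion `δ_{m+1} = (π ⊗ δ_m) ∘ Δ` this makes `δ_{m+1}` factor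
through `δ_m`, so the filtration `D_n` is increasing, and coassociativity makes `(δ_a ⊗ δ_b) ∘ Δ`
factor through `δ_{a+b}`.

For `x ∈ D_n` write `Δ x = y + 1̲ ⊗ x + x ⊗ 1̲ - ε(x) 1̲ ⊗ 1̲` with `y = (π ⊗ π)(Δ x)`. The
factorisations show that `y` is killed by `δ_{r+1} ⊗ δ_{s+1}` for `r + s + 1 = n` and by
`δ_{n+1} ⊗ id` and `id ⊗ δ_{n+1}`. Over a field `ker (f ⊗ g) = ker f ⊗ C + C ⊗ ker g`, and cutting
`y` into pieces with projections onto `D_0 ⊆ D_1 ⊆ ⋯ ⊆ D_n` in the right-hand factor puts it into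
`Σ_{r+s=n} D_r ⊗ D_s`.
-/

open TensorProduct PiTensorProduct

noncomputable section

namespace CDP

variable (k : Type) [Field k] (C : Type) [AddCommGroup C] [Module k C]

/-- The canonical equivalence `⨂[k]^1 C ≃ C`. -/
def tpowOne : (⨂[k]^1 C) ≃ₗ[k] C := PiTensorProduct.subsingletonEquiv (0 : Fin 1)

/-- Splitting a tensor power. -/
def tpowSplit (a b : ℕ) : (⨂[k]^(a+b) C) ≃ₗ[k] (⨂[k]^a C) ⊗[k] (⨂[k]^b C) :=
  (PiTensorProduct.reindex k (fun _ : Fin (a+b) => C) finSumFinEquiv.symm).trans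
    (PiTensorProduct.tmulEquiv k C).symm

/-- Prepending a tensor factor. -/
def consTP (n : ℕ) : C ⊗[k] (⨂[k]^n C) →ₗ[k] ⨂[k]^(n+1) C :=
  (PiTensorProduct.reindex k (fun _ : Fin (1+n) => C)
      (finCongr (Nat.add_comm 1 n))).toLinearMap ∘ₗ
    (tpowSplit k C 1 n).symm.toLinearMap ∘ₗ
    (TensorProduct.map (tpowOne k C).symm.toLinearMap LinearMap.id)

variable {C} in
/-- The iterated comultiplication `Δ^n : C → C^{⊗ n}`, with `Δ^0 := ε`. -/
def DeltaIter (comul : C →ₗ[k] C ⊗[k] C) (counit : C →ₗ[k] k) :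
    (n : ℕ) → (C →ₗ[k] ⨂[k]^n C)
  | 0 => (PiTensorProduct.isEmptyEquiv (Fin 0)).symm.toLinearMap ∘ₗ counit
  | n+1 => consTP k C n ∘ₗ
      (TensorProduct.map LinearMap.id (DeltaIter comul counit n)) ∘ₗ comul

variable {C} in
/-- The projection `id - u ∘ ε` associated to the coaugmentation `one = u(1)`. -/
def proj (counit : C →ₗ[k] k) (one : C) : C →ₗ[k] C :=
  LinearMap.id - (LinearMap.toSpanSingleton k C one) ∘ₗ counit

variable {C} in
/-- Drinfeld's maps `δ_n := (id - u∘ε)^{⊗n} ∘ Δ^n`. -/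
def deltaN (comul : C →ₗ[k] C ⊗[k] C) (counit : C →ₗ[k] k) (one : C) (n : ℕ) :
    C →ₗ[k] ⨂[k]^n C :=
  (PiTensorProduct.map fun _ : Fin n => proj k counit one) ∘ₗ DeltaIter k comul counit n

variable {C} in
/-- The `δ`-filtration `D_n := ker δ_{n+1}`. -/
def Dfil (comul : C →ₗ[k] C ⊗[k] C) (counit : C →ₗ[k] k) (one : C) (n : ℕ) :
    Submodule k C :=
  LinearMap.ker (deltaN k comul counit one (n+1))

/-- For subspaces `X, Y ⊆ C`, the subspace `X ⊗ Y ⊆ C ⊗ C`. -/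
def tsub (X Y : Submodule k C) : Submodule k (C ⊗[k] C) :=
  LinearMap.range (TensorProduct.map X.subtype Y.subtype)

end CDP

namespace CDP

local infix:70 " ⊗ₘ " => TensorProduct.map

section TensorSubspaces

variable {k : Type} [Field k] {C : Type} [AddCommGroup C] [Module k C]

lemma _root_.Submodule.exists_isProj (A : Submodule k C) : ∃ p : C →ₗ[k] C, LinearMap.IsProj A p :=
  let ⟨B, hAB⟩ := A.exists_isCompl
  ⟨A.projection B hAB, ⟨A.projection_apply_mem hAB, fun _ hx ↦
    Submodule.projection_apply_of_mem_left hAB hx⟩⟩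

lemma tmul_mem_tsub {A B : Submodule k C} {x y : C} (hx : x ∈ A) (hy : y ∈ B) :
    x ⊗ₜ[k] y ∈ tsub k C A B :=
  ⟨⟨x, hx⟩ ⊗ₜ ⟨y, hy⟩, rfl⟩

lemma tsub_bot_left (B : Submodule k C) : tsub k C ⊥ B = ⊥ := by
  simp [tsub, TensorProduct.range_map]

lemma tsub_bot_right (A : Submodule k C) : tsub k C A ⊥ = ⊥ := by
  simp [tsub, TensorProduct.range_map]

lemma map_mem_tsub {A B A' B' : Submodule k C} {f g : C →ₗ[k] C}
    (hf : Set.MapsTo f A A') (hg : Set.MapsTo g B B') {y : C ⊗[k] C} (hy : y ∈ tsub k C A B) :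
    (f ⊗ₘ g) y ∈ tsub k C A' B' := by
  obtain ⟨z, rfl⟩ := hy
  rw [TensorProduct.map_map]
  refine TensorProduct.range_map_mono ?_ ?_ ⟨z, rfl⟩ <;>
    simp only [LinearMap.range_comp, Submodule.range_subtype, Submodule.map_le_iff_le_comap]
  exacts [fun _ hx ↦ hf hx, fun _ hx ↦ hg hx]

lemma map_apply_eq_self_of_mem_tsub {A B : Submodule k C} {f g : C →ₗ[k] C}
    (hf : ∀ x ∈ A, f x = x) (hg : ∀ x ∈ B, g x = x) {y : C ⊗[k] C} (hy : y ∈ tsub k C A B) :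
    (f ⊗ₘ g) y = y := by
  obtain ⟨z, rfl⟩ := hy
  rw [TensorProduct.map_map]
  congr 2 <;> ext x
  exacts [hf x x.2, hg x x.2]

variable {M N : Type} [AddCommGroup M] [Module k M] [AddCommGroup N] [Module k N]

lemma ker_map_eq_tsub_sup_tsub (f : C →ₗ[k] M) (g : C →ₗ[k] N) :
    LinearMap.ker (f ⊗ₘ g) =
      tsub k C (LinearMap.ker f) ⊤ ⊔ tsub k C ⊤ (LinearMap.ker g) := by
  have hfac : f ⊗ₘ g = TensorProduct.mapIncl (LinearMap.range f) (LinearMap.range g)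
      ∘ₗ (f.rangeRestrict ⊗ₘ g.rangeRestrict) := by
    rw [← TensorProduct.map_comp]; rfl
  have exact_ker {P : Type} [AddCommGroup P] [Module k P] (h : C →ₗ[k] P) :
      Function.Exact (LinearMap.ker h.rangeRestrict).subtype h.rangeRestrict :=
    LinearMap.exact_subtype_ker_map _
  rw [hfac, LinearMap.ker_comp_of_ker_eq_bot _ (LinearMap.ker_eq_bot.2
      (TensorProduct.map_injective_of_flat_flat _ _ (Submodule.injective_subtype _)
        (Submodule.injective_subtype _))),
    TensorProduct.map_ker (exact_ker f) f.surjective_rangeRestrict (exact_ker g)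
      g.surjective_rangeRestrict, sup_comm]
  simp [tsub, LinearMap.lTensor, LinearMap.rTensor, TensorProduct.range_map]

lemma mem_iSup_tsub_of_forall_mem_sup {F G : ℕ → Submodule k C} (hG : Monotone G) {n : ℕ}
    {y : C ⊗[k] C} (hleft : y ∈ tsub k C (F n) ⊤) (hright : y ∈ tsub k C ⊤ (G n))
    (hmid : ∀ r s, r + s + 1 = n → y ∈ tsub k C (F r) ⊤ ⊔ tsub k C ⊤ (G s)) :
    y ∈ ⨆ r ∈ Finset.range (n + 1), tsub k C (F r) (G (n - r)) := by
  set S := ⨆ r ∈ Finset.range (n + 1), tsub k C (F r) (G (n - r))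
  have hS {r s : ℕ} (h : r + s = n) : tsub k C (F r) (G s) ≤ S := by
    obtain rfl : s = n - r := by omega
    exact le_biSup (fun r ↦ tsub k C (F r) (G (n - r))) (Finset.mem_range.2 (by omega))
  choose p hp using fun j ↦ (G j).exists_isProj
  -- Going from `p j` to `p (j + 1)` adds `(id ⊗ (p (j + 1) - p j)) y`, which lies in
  -- `F (n - j - 1) ⊗ G (j + 1)` since `p (j + 1) - p j` kills the `G j`-part given by `hmid`.
  suffices ∀ j ≤ n, (p j).lTensor C y ∈ S by
    simpa [LinearMap.lTensor, map_apply_eq_self_of_mem_tsub (f := LinearMap.id) (fun _ _ ↦ rfl)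
      (hp n).map_id hright] using this n le_rfl
  intro j hj
  induction j with
  | zero => exact hS (add_zero n) (map_mem_tsub (fun _ ↦ id) (fun x _ ↦ (hp 0).map_mem x) hleft)
  | succ s ih =>
    obtain ⟨u, hu, v, hv, rfl⟩ := Submodule.mem_sup.1 (hmid (n - s - 1) s (by omega))
    have hstep : (p (s + 1) - p s).lTensor C (u + v) ∈ tsub k C (F (n - s - 1)) (G (s + 1)) := by
      have hv0 : (p (s + 1) - p s).lTensor C v = 0 := by
        have := map_mem_tsub (f := LinearMap.id) (g := p (s + 1) - p s) (A' := ⊤) (B' := ⊥)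
          (fun _ _ ↦ Submodule.mem_top)
          (fun x hx ↦ by simp [(hp s).map_id x hx, (hp (s + 1)).map_id x (hG s.le_succ hx)]) hv
        rwa [tsub_bot_right, Submodule.mem_bot] at this
      rw [map_add, hv0, add_zero]
      exact map_mem_tsub (fun _ ↦ id)
        (fun x _ ↦ sub_mem ((hp (s + 1)).map_mem x) (hG s.le_succ ((hp s).map_mem x))) hu
    simpa [LinearMap.lTensor_sub] using add_mem (ih (by omega)) (hS (by omega) hstep)

end TensorSubspaces

section TensorPowers

variable (k : Type) [Field k] (C : Type) [AddCommGroup C] [Module k C]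

lemma consTP_tmul_tprod (n : ℕ) (x : C) (f : Fin n → C) :
    consTP k C n (x ⊗ₜ[k] PiTensorProduct.tprod k f) = PiTensorProduct.tprod k (Fin.cons x f) := by
  simp only [consTP, tpowSplit, tpowOne, LinearMap.coe_comp, LinearEquiv.coe_coe,
    Function.comp_apply, TensorProduct.map_tmul, LinearMap.id_apply,
    PiTensorProduct.subsingletonEquiv_symm_apply, LinearEquiv.trans_symm,
    LinearEquiv.trans_apply, PiTensorProduct.reindex_symm,
    PiTensorProduct.tmulEquiv_apply, PiTensorProduct.reindex_tprod,
    LinearEquiv.symm_symm, Equiv.symm_symm]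
  congr 1
  ext i
  refine Fin.cases ?_ (fun j ↦ ?_) i
  · rfl
  · rw [show (finCongr (Nat.add_comm 1 n)).symm j.succ = Fin.natAdd 1 j from
      Fin.ext (Nat.add_comm _ _), finSumFinEquiv_symm_apply_natAdd]
    rfl

lemma piTensorMap_comp_consTP (n : ℕ) (g : C →ₗ[k] C) :
    (PiTensorProduct.map fun _ : Fin (n + 1) ↦ g) ∘ₗ consTP k C n =
      consTP k C n ∘ₗ (g ⊗ₘ PiTensorProduct.map fun _ : Fin n ↦ g) := by
  refine TensorProduct.ext <| LinearMap.ext fun x ↦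
    PiTensorProduct.ext <| MultilinearMap.ext fun f ↦ ?_
  simp only [LinearMap.compMultilinearMap_apply, LinearMap.compr₂ₛₗ_apply, TensorProduct.mk_apply,
    LinearMap.coe_comp, Function.comp_apply, consTP_tmul_tprod, PiTensorProduct.map_tprod,
    TensorProduct.map_tmul]
  congr 1
  ext i
  refine Fin.cases ?_ (fun j ↦ ?_) i <;> simp

def consEquiv (n : ℕ) : (C ⊗[k] ⨂[k]^n C) ≃ₗ[k] ⨂[k]^(n + 1) C :=
  (TensorProduct.congr (tpowOne k C).symm (LinearEquiv.refl k _)).trans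
    ((tpowSplit k C 1 n).symm.trans
      (PiTensorProduct.reindex k (fun _ : Fin (1 + n) ↦ C) (finCongr (Nat.add_comm 1 n))))

lemma consEquiv_toLinearMap (n : ℕ) : (consEquiv k C n).toLinearMap = consTP k C n := rfl

end TensorPowers

section Drinfeld

variable {k : Type} [Field k] {C : Type} [AddCommGroup C] [Module k C]

lemma deltaN_succ (comul : C →ₗ[k] C ⊗[k] C) (counit : C →ₗ[k] k) (one : C) (n : ℕ) :
    deltaN k comul counit one (n + 1) =
      consTP k C n ∘ₗ (proj k counit one ⊗ₘ deltaN k comul counit one n) ∘ₗ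
        comul := by
  simp only [deltaN, DeltaIter, ← LinearMap.comp_assoc, piTensorMap_comp_consTP]
  simp only [LinearMap.comp_assoc, ← TensorProduct.map_comp, LinearMap.comp_id]

variable [Coalgebra k C] {one : C}

local notation "Δ" => (Coalgebra.comul : C →ₗ[k] C ⊗[k] C)
local notation "ε" => (Coalgebra.counit : C →ₗ[k] k)
local notation "π" => proj k ε one
local notation "δ" => deltaN k Δ ε one
local notation "D" => Dfil k Δ ε one

lemma proj_apply (x : C) : π x = x - ε x • one := rfl

lemma proj_one (hcounit : ε one = 1) : π one = 0 := by
  rw [proj_apply, hcounit, one_smul, sub_self]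

lemma tpowOne_comp_deltaN_one : (tpowOne k C).toLinearMap ∘ₗ δ 1 = π := by
  ext x
  have hδ0 : δ 0 = ((PiTensorProduct.map fun _ ↦ π) ∘ₗ
      (PiTensorProduct.isEmptyEquiv (Fin 0)).symm.toLinearMap) ∘ₗ ε := rfl
  have hΔ : (π ⊗ₘ δ 0) (Δ x) = π x ⊗ₜ[k] PiTensorProduct.tprod k Fin.elim0 := by
    rw [hδ0, ← LinearMap.map_comp_lTensor, LinearMap.comp_apply,
      Coalgebra.lTensor_counit_comul]
    simp only [LinearMap.comp_apply, TensorProduct.map_tmul, LinearEquiv.coe_coe,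
      PiTensorProduct.isEmptyEquiv_symm_apply, one_smul, PiTensorProduct.map_tprod]
    congr
    exact funext fun i ↦ i.elim0
  simp only [LinearMap.comp_apply, deltaN_succ, hΔ, consTP_tmul_tprod]
  simp [tpowOne]

lemma deltaN_one : δ 1 = (tpowOne k C).symm.toLinearMap ∘ₗ π := by
  rw [← tpowOne_comp_deltaN_one, ← LinearMap.comp_assoc]
  simp

lemma comp_proj_of_apply_one {M : Type} [AddCommGroup M] [Module k M] {f : C →ₗ[k] M}
    (hf : f one = 0) : f ∘ₗ π = f := by
  ext x
  simp [proj_apply, hf]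

lemma deltaN_succ_apply_one (hcomul : Δ one = one ⊗ₜ[k] one) (hcounit : ε one = 1) (n : ℕ) :
    δ (n + 1) one = 0 := by
  simp [deltaN_succ, hcomul, proj_one hcounit]

lemma map_proj_deltaN_comp_comul (n : ℕ) :
    (π ⊗ₘ δ n) ∘ₗ Δ = (consEquiv k C n).symm.toLinearMap ∘ₗ δ (n + 1) := by
  rw [deltaN_succ, ← consEquiv_toLinearMap, ← LinearMap.comp_assoc, ← LinearMap.comp_assoc]
  simp

lemma exists_deltaN_succ_succ_eq_comp (hcomul : Δ one = one ⊗ₜ[k] one) (hcounit : ε one = 1)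
    (m : ℕ) : ∃ T : (⨂[k]^(m + 1) C) →ₗ[k] ⨂[k]^(m + 2) C, δ (m + 2) = T ∘ₗ δ (m + 1) := by
  induction m with
  | zero =>
    refine ⟨δ 2 ∘ₗ (tpowOne k C).toLinearMap, ?_⟩
    rw [LinearMap.comp_assoc, tpowOne_comp_deltaN_one,
      comp_proj_of_apply_one (deltaN_succ_apply_one hcomul hcounit 1)]
  | succ m ih =>
    obtain ⟨T, hT⟩ := ih
    refine ⟨consTP k C (m + 2) ∘ₗ T.lTensor C ∘ₗ (consEquiv k C (m + 1)).symm.toLinearMap, ?_⟩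
    conv_lhs => rw [deltaN_succ, hT, ← LinearMap.lTensor_comp_map, LinearMap.comp_assoc,
      map_proj_deltaN_comp_comul]
    simp only [LinearMap.comp_assoc]

lemma monotone_Dfil (hcomul : Δ one = one ⊗ₜ[k] one) (hcounit : ε one = 1) :
    Monotone (Dfil k Δ ε one) := by
  refine monotone_nat_of_le_succ fun m x hx ↦ ?_
  obtain ⟨T, hT⟩ := exists_deltaN_succ_succ_eq_comp hcomul hcounit m
  simp only [Dfil, LinearMap.mem_ker] at hx ⊢
  rw [hT, LinearMap.comp_apply, hx, map_zero]

lemma exists_map_deltaN_comp_comul_eq_comp (a b : ℕ) :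
    ∃ T : (⨂[k]^(a + b + 1) C) →ₗ[k] (⨂[k]^(a + 1) C) ⊗[k] ⨂[k]^b C,
      (δ (a + 1) ⊗ₘ δ b) ∘ₗ Δ = T ∘ₗ δ (a + b + 1) := by
  induction a with
  | zero =>
    rw [Nat.zero_add]
    refine ⟨(tpowOne k C).symm.toLinearMap.rTensor _ ∘ₗ (consEquiv k C b).symm.toLinearMap, ?_⟩
    rw [deltaN_one, ← LinearMap.rTensor_comp_map, LinearMap.comp_assoc, map_proj_deltaN_comp_comul,
      LinearMap.comp_assoc]
  | succ a ih =>
    obtain ⟨T, hT⟩ := ih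
    rw [Nat.add_right_comm a 1 b]
    refine ⟨(consTP k C (a + 1)).rTensor _ ∘ₗ
      (TensorProduct.assoc k C (⨂[k]^(a + 1) C) (⨂[k]^b C)).symm.toLinearMap ∘ₗ
      T.lTensor C ∘ₗ (consEquiv k C (a + b + 1)).symm.toLinearMap, ?_⟩
    calc (δ (a + 1 + 1) ⊗ₘ δ b) ∘ₗ Δ
        = (consTP k C (a + 1)).rTensor _ ∘ₗ
            (TensorProduct.assoc k C (⨂[k]^(a + 1) C) (⨂[k]^b C)).symm.toLinearMap ∘ₗ
            (π ⊗ₘ (δ (a + 1) ⊗ₘ δ b) ∘ₗ Δ) ∘ₗ Δ := by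
          rw [deltaN_succ _ _ _ (a + 1)]
          simp only [coassoc_simps]
      _ = _ := by
          rw [hT, ← LinearMap.lTensor_comp_map, LinearMap.comp_assoc, map_proj_deltaN_comp_comul]
          simp only [LinearMap.comp_assoc]

lemma map_proj_proj_comul (x : C) :
    (π ⊗ₘ π) (Δ x) = Δ x - one ⊗ₜ[k] x - x ⊗ₜ[k] one + ε x • (one ⊗ₜ[k] one) := by
  have hl : LinearMap.lTensor C π (Δ x) = Δ x - x ⊗ₜ[k] one := by
    simp [proj, LinearMap.lTensor_sub, LinearMap.lTensor_comp_apply, Coalgebra.lTensor_counit_comul]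
  have hr : LinearMap.rTensor C π (Δ x) = Δ x - one ⊗ₜ[k] x := by
    simp [proj, LinearMap.rTensor_sub, LinearMap.rTensor_comp_apply, Coalgebra.rTensor_counit_comul]
  rw [← LinearMap.rTensor_comp_lTensor, LinearMap.comp_apply, hl, map_sub, hr,
    LinearMap.rTensor_tmul, proj_apply, TensorProduct.sub_tmul, TensorProduct.smul_tmul']
  abel

lemma map_proj_proj_comul_mem (hcomul : Δ one = one ⊗ₜ[k] one) (hcounit : ε one = 1) {n : ℕ}
    {x : C} (hx : x ∈ D n) :
    (π ⊗ₘ π) (Δ x) ∈ ⨆ r ∈ Finset.range (n + 1), tsub k C (D r) (D (n - r)) := by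
  have hD := monotone_Dfil hcomul hcounit
  have hproj (m : ℕ) : δ (m + 1) ∘ₗ π = δ (m + 1) :=
    comp_proj_of_apply_one (deltaN_succ_apply_one hcomul hcounit m)
  have hvanish (a b : ℕ) (hab : n ≤ a + b + 1) : (δ (a + 1) ⊗ₘ δ (b + 1)) (Δ x) = 0 := by
    obtain ⟨T, hT⟩ := exists_map_deltaN_comp_comul_eq_comp (k := k) (one := one) a (b + 1)
    have hx' : δ (a + (b + 1) + 1) x = 0 := hD hab hx
    rw [← LinearMap.comp_apply, hT, LinearMap.comp_apply, hx', map_zero]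
  refine mem_iSup_tsub_of_forall_mem_sup hD ?_ ?_ fun r s hrs ↦ ?_
  · have h : (δ (n + 1) ⊗ₘ LinearMap.id) ((π ⊗ₘ π) (Δ x)) = 0 := by
      rw [TensorProduct.map_map, hproj, LinearMap.id_comp, ← tpowOne_comp_deltaN_one,
        ← LinearMap.lTensor_comp_map, LinearMap.comp_apply, hvanish n 0 (by omega), map_zero]
    have h' := LinearMap.mem_ker.2 h
    rwa [ker_map_eq_tsub_sup_tsub, LinearMap.ker_id, tsub_bot_right, sup_bot_eq] at h'
  · have h : (LinearMap.id ⊗ₘ δ (n + 1)) ((π ⊗ₘ π) (Δ x)) = 0 := by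
      rw [TensorProduct.map_map, hproj, LinearMap.id_comp, ← tpowOne_comp_deltaN_one,
        ← LinearMap.rTensor_comp_map, LinearMap.comp_apply, hvanish 0 n (by omega), map_zero]
    have h' := LinearMap.mem_ker.2 h
    rwa [ker_map_eq_tsub_sup_tsub, LinearMap.ker_id, tsub_bot_left, bot_sup_eq] at h'
  · have h : (δ (r + 1) ⊗ₘ δ (s + 1)) ((π ⊗ₘ π) (Δ x)) = 0 := by
      rw [TensorProduct.map_map, hproj, hproj, hvanish r s (by omega)]
    have h' := LinearMap.mem_ker.2 h
    rwa [ker_map_eq_tsub_sup_tsub] at h'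

lemma map_comul_Dfil_le_iSup_tsub (hcomul : Δ one = one ⊗ₜ[k] one) (hcounit : ε one = 1)
    (n : ℕ) : (D n).map Δ ≤ ⨆ r ∈ Finset.range (n + 1), tsub k C (D r) (D (n - r)) := by
  rintro _ ⟨x, hx, rfl⟩
  have hone : one ∈ D 0 := deltaN_succ_apply_one hcomul hcounit 0
  have hS {r : ℕ} (hr : r ≤ n) : tsub k C (D r) (D (n - r)) ≤
      ⨆ r ∈ Finset.range (n + 1), tsub k C (D r) (D (n - r)) :=
    le_biSup (fun r ↦ tsub k C (D r) (D (n - r))) (Finset.mem_range.2 (by omega))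
  have hdecomp : Δ x = (π ⊗ₘ π) (Δ x) + one ⊗ₜ[k] x + x ⊗ₜ[k] one -
      ε x • (one ⊗ₜ[k] one) := by
    rw [map_proj_proj_comul]
    abel
  rw [hdecomp]
  refine sub_mem (add_mem (add_mem (map_proj_proj_comul_mem hcomul hcounit hx) ?_) ?_) ?_
  · exact hS (Nat.zero_le n) (tmul_mem_tsub hone hx)
  · exact hS le_rfl (tmul_mem_tsub hx (by rwa [Nat.sub_self]))
  · exact hS (Nat.zero_le n)
      (Submodule.smul_mem _ _ (tmul_mem_tsub hone (monotone_Dfil hcomul hcounit n.zero_le hone)))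

end Drinfeld

end CDP

open CDP

/-- **Lemma 2.8(b),(d).** In a coaugmented `k`-coalgebra `C`, the
`δ`-filtration is a coalgebra filtration: `Δ(D_n) ⊆ Σ_{r+s=n} D_r ⊗ D_s` for
all `n ∈ ℕ`.  Consequently `C′ := ⋃_{n ∈ ℕ} D_n` is a subcoalgebra of `C`
containing the coaugmentation element `1̲`. -/
theorem delta_filtration_is_coalgebra_filtration
    (k : Type) [Field k] (C : Type) [AddCommGroup C] [Module k C] [Coalgebra k C]
    (one : C) (hcomul : Coalgebra.comul one = one ⊗ₜ[k] one)
    (hcounit : Coalgebra.counit one = (1 : k)) :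
    (∀ n : ℕ,
      Submodule.map (Coalgebra.comul : C →ₗ[k] C ⊗[k] C)
          (Dfil k Coalgebra.comul Coalgebra.counit one n) ≤
        ⨆ r ∈ Finset.range (n+1),
          tsub k C (Dfil k Coalgebra.comul Coalgebra.counit one r)
            (Dfil k Coalgebra.comul Coalgebra.counit one (n - r))) ∧
    one ∈ (⨆ n : ℕ, Dfil k Coalgebra.comul Coalgebra.counit one n) ∧
    Submodule.map (Coalgebra.comul : C →ₗ[k] C ⊗[k] C)
        (⨆ n : ℕ, Dfil k Coalgebra.comul Coalgebra.counit one n) ≤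
      tsub k C (⨆ n : ℕ, Dfil k Coalgebra.comul Coalgebra.counit one n)
        (⨆ n : ℕ, Dfil k Coalgebra.comul Coalgebra.counit one n) := by
  have hfil := map_comul_Dfil_le_iSup_tsub hcomul hcounit
  refine ⟨hfil, Submodule.mem_iSup_of_mem 0 (deltaN_succ_apply_one hcomul hcounit 0), ?_⟩
  rw [Submodule.map_iSup]
  exact iSup_le fun n ↦ (hfil n).trans <| iSup₂_le fun r _ ↦
    TensorProduct.range_mapIncl_mono (le_iSup _ r) (le_iSup _ (n - r))
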